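/- Let g : ℝ² → ℝ be a smooth compactly supported function and c := exp∘g. Then ∫_{ℝ²} c⁻³ |∇c|⁴ dx + ∫_{ℝ²} c⁻¹ |D²c|² dx ≤ 77 ∫_{ℝ²} c |D²(ln c)|² dx. -/

import Mathlib

open MeasureTheory Real

noncomputable section

/-- The plane `ℝ²` as a Euclidean space. -/
abbrev E2 : Type := EuclideanSpace ℝ (Fin 2)

/-- `i`-th partial derivative of a scalar function on `ℝ²`. -/
def pd (i : Fin 2) (f : E2 → ℝ) (x : E2) : ℝ :=
  fderiv ℝ f x (EuclideanSpace.single i 1)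

/-- Laplacian `Δf = ∑ i, ∂_i ∂_i f`. -/
def lap (f : E2 → ℝ) (x : E2) : ℝ := ∑ i, pd i (pd i f) x

/-- `|∇f|² = ∑ i, (∂_i f)²`. -/
def gradSq (f : E2 → ℝ) (x : E2) : ℝ := ∑ i, (pd i f x) ^ 2

/-- Squared Frobenius norm of the Hessian: `|D²f|² = ∑ i j, (∂²_{ij} f)²`. -/
def hessSq (f : E2 → ℝ) (x : E2) : ℝ := ∑ i, ∑ j, (pd i (pd j f) x) ^ 2

/-- `⟨D²f ∇f, ∇f⟩ = ∑ i j, (∂²_{ij} f)(∂_i f)(∂_j f)`. -/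
def hessGrad (f : E2 → ℝ) (x : E2) : ℝ :=
  ∑ i, ∑ j, pd i (pd j f) x * pd i f x * pd j f x

end

/-!
For `c = exp g` one has `c⁻³ |∇c|⁴ = c |∇g|⁴`,
`c⁻¹ |D²c|² = c |∇g ⊗ ∇g + D²g|² ≤ 2c |∇g|⁴ + 2c |D²g|²` and `D² ln c = D²g`, so everything
reduces to `∫ c |∇g|⁴ ≤ 20 ∫ c |D²g|²`. Since `∇c = c ∇g`, `c |∇g|⁴ = ⟨|∇g|² ∇g, ∇c⟩`, and
integrating by parts gives
`∫ c |∇g|⁴ = -∫ c (Δg |∇g|² + 2 ⟨D²g ∇g, ∇g⟩)`. In the plane this integrand is pointwise at most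
`5 |D²g|² + ¾ |∇g|⁴`; absorbing the last term gives the factor 20, and `3 · 20 + 2 ≤ 77`.
-/

open scoped ContDiff

section PartialDerivatives

variable {f h : E2 → ℝ} {i j : Fin 2} {x : E2}

lemma pd_eq_zero_of_notMem_tsupport (hx : x ∉ tsupport f) : pd i f x = 0 := by
  simp [pd, fderiv_of_notMem_tsupport ℝ hx]

lemma pd_pd_eq_zero_of_notMem_tsupport (hx : x ∉ tsupport f) : pd i (pd j f) x = 0 :=
  pd_eq_zero_of_notMem_tsupport fun hx' => hx (tsupport_fderiv_apply_subset ℝ _ hx')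

lemma hasCompactSupport_pd (hf : HasCompactSupport f) (i : Fin 2) : HasCompactSupport (pd i f) :=
  hf.fderiv_apply ℝ _

lemma continuous_pd (hf : ContDiff ℝ 1 f) (i : Fin 2) : Continuous (pd i f) :=
  (hf.continuous_fderiv one_ne_zero).clm_apply continuous_const

lemma contDiff_pd (hf : ContDiff ℝ ∞ f) (i : Fin 2) : ContDiff ℝ ∞ (pd i f) :=
  (hf.fderiv_right le_rfl).clm_apply contDiff_const

lemma pd_mul (hf : DifferentiableAt ℝ f x) (hh : DifferentiableAt ℝ h x) :
    pd i (fun y => f y * h y) x = pd i f x * h x + f x * pd i h x := by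
  simp only [pd, fderiv_fun_mul hf hh, add_apply, smul_apply, smul_eq_mul]
  ring

lemma pd_exp (hf : DifferentiableAt ℝ f x) :
    pd i (fun y => exp (f y)) x = exp (f x) * pd i f x := by
  simp [pd, fderiv_exp hf]

lemma pd_gradSq (hf : ∀ j, DifferentiableAt ℝ (pd j f) x) :
    pd i (gradSq f) x = 2 * ∑ j, pd j f x * pd i (pd j f) x := by
  change fderiv ℝ (fun y => ∑ j, pd j f y ^ 2) x _ = _
  rw [fderiv_fun_sum (A := fun j y => pd j f y ^ 2) fun j _ => (hf j).pow 2,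
    sum_apply, Finset.mul_sum]
  refine Finset.sum_congr rfl fun j _ => ?_
  rw [fderiv_fun_pow 2 (hf j)]
  simp only [pd, Nat.add_one_sub_one, pow_one, nsmul_eq_mul, Nat.cast_ofNat, smul_apply,
    smul_eq_mul]
  ring

lemma integral_mul_pd_eq_neg_integral_pd_mul (hf : ContDiff ℝ 1 f) (hfc : HasCompactSupport f)
    (hh : ContDiff ℝ 1 h) (i : Fin 2) :
    ∫ x, f x * pd i h x = -∫ x, pd i f x * h x :=
  integral_mul_fderiv_eq_neg_fderiv_mul_of_integrable
    (((continuous_pd hf i).mul hh.continuous).integrable_of_hasCompactSupport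
      (hasCompactSupport_pd hfc i).mul_right)
    ((hf.continuous.mul (continuous_pd hh i)).integrable_of_hasCompactSupport hfc.mul_right)
    ((hf.continuous.mul hh.continuous).integrable_of_hasCompactSupport hfc.mul_right)
    (fun x _ => hf.differentiable one_ne_zero x) (fun x _ => hh.differentiable one_ne_zero x)

lemma hessSq_nonneg (f : E2 → ℝ) (x : E2) : 0 ≤ hessSq f x :=
  Finset.sum_nonneg fun _ _ => Finset.sum_nonneg fun _ _ => sq_nonneg _

variable (hf : ContDiff ℝ ∞ f)
include hf

lemma contDiff_gradSq : ContDiff ℝ ∞ (gradSq f) :=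
  ContDiff.sum fun i _ => (contDiff_pd hf i).pow 2

lemma continuous_hessSq : Continuous (hessSq f) :=
  continuous_finsetSum _ fun i _ => continuous_finsetSum _ fun j _ =>
    (contDiff_pd (contDiff_pd hf j) i).continuous.pow 2

lemma sum_pd_pd_mul_gradSq (x : E2) :
    ∑ i, pd i (fun y => pd i f y * gradSq f y) x = lap f x * gradSq f x + 2 * hessGrad f x := by
  have hd : ∀ j, Differentiable ℝ (pd j f) := fun j => (contDiff_pd hf j).differentiable (by simp)
  simp only [pd_mul (hd _ x) ((contDiff_gradSq hf).differentiable (by simp) x),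
    pd_gradSq fun j => hd j x, Finset.sum_add_distrib, lap, hessGrad, Finset.sum_mul,
    Finset.mul_sum]
  congr 1
  refine Finset.sum_congr rfl fun i _ => Finset.sum_congr rfl fun j _ => ?_
  ring

end PartialDerivatives

lemma sum_sum_mul_add_sq_le {ι : Type*} [Fintype ι] (p : ι → ℝ) (a : ι → ι → ℝ) :
    ∑ i, ∑ j, (p i * p j + a i j) ^ 2 ≤ 2 * (∑ i, p i ^ 2) ^ 2 + 2 * ∑ i, ∑ j, a i j ^ 2 := by
  have hp : (∑ i, p i ^ 2) ^ 2 = ∑ i, ∑ j, (p i * p j) ^ 2 := by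
    simp only [sq, Finset.sum_mul_sum]
    ring_nf
  calc ∑ i, ∑ j, (p i * p j + a i j) ^ 2
      ≤ ∑ i, ∑ j, (2 * (p i * p j) ^ 2 + 2 * a i j ^ 2) :=
        Finset.sum_le_sum fun i _ => Finset.sum_le_sum fun j _ => by
          nlinarith [sq_nonneg (p i * p j - a i j)]
    _ = 2 * (∑ i, p i ^ 2) ^ 2 + 2 * ∑ i, ∑ j, a i j ^ 2 := by
        simp only [hp, Finset.sum_add_distrib, Finset.mul_sum]

-- Dimension two enters through `(a 0 0 + a 1 1) ^ 2 ≤ 2 (a 0 0 ^ 2 + a 1 1 ^ 2)`.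
lemma neg_trace_mul_add_quadForm_le (a : Fin 2 → Fin 2 → ℝ) (p : Fin 2 → ℝ) :
    -((∑ i, a i i) * ∑ i, p i ^ 2 + 2 * ∑ i, ∑ j, a i j * p i * p j)
      ≤ 5 * ∑ i, ∑ j, a i j ^ 2 + 3 / 4 * (∑ i, p i ^ 2) ^ 2 := by
  simp only [Fin.sum_univ_two]
  nlinarith [sq_nonneg (a 0 0 + a 1 1 + (p 0 ^ 2 + p 1 ^ 2)), sq_nonneg (a 0 0 - a 1 1),
    sq_nonneg (4 * a 0 0 + p 0 * p 0), sq_nonneg (4 * a 0 1 + p 0 * p 1),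
    sq_nonneg (4 * a 1 0 + p 1 * p 0), sq_nonneg (4 * a 1 1 + p 1 * p 1)]

lemma neg_lap_mul_gradSq_add_hessGrad_le (f : E2 → ℝ) (x : E2) :
    -(lap f x * gradSq f x + 2 * hessGrad f x) ≤ 5 * hessSq f x + 3 / 4 * gradSq f x ^ 2 :=
  neg_trace_mul_add_quadForm_le (fun i j => pd i (pd j f) x) (fun i => pd i f x)

section Exponential

variable {g : E2 → ℝ}

lemma gradSq_exp (hg : Differentiable ℝ g) (x : E2) :
    gradSq (fun y => exp (g y)) x = exp (g x) ^ 2 * gradSq g x := by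
  simp only [gradSq, pd_exp (hg x), mul_pow, Finset.mul_sum]

lemma integral_gradSq_exp_sq_div (hg : Differentiable ℝ g) :
    ∫ x, gradSq (fun y => exp (g y)) x ^ 2 / exp (g x) ^ 3 = ∫ x, exp (g x) * gradSq g x ^ 2 := by
  refine integral_congr_ae (ae_of_all _ fun x => ?_)
  simp only [gradSq_exp hg x]
  field_simp

lemma pd_pd_exp (hg : ContDiff ℝ ∞ g) (i j : Fin 2) (x : E2) :
    pd i (pd j fun y => exp (g y)) x = exp (g x) * (pd i g x * pd j g x + pd i (pd j g) x) := by
  have hd : Differentiable ℝ g := hg.differentiable (by simp)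
  have hpd : pd j (fun y => exp (g y)) = fun y => exp (g y) * pd j g y :=
    funext fun y => pd_exp (hd y)
  rw [hpd, pd_mul (hd.exp x) ((contDiff_pd hg j).differentiable (by simp) x), pd_exp (hd x)]
  ring

lemma hessSq_exp_le (hg : ContDiff ℝ ∞ g) (x : E2) :
    hessSq (fun y => exp (g y)) x ≤ exp (g x) ^ 2 * (2 * gradSq g x ^ 2 + 2 * hessSq g x) := by
  simp only [hessSq, pd_pd_exp hg, mul_pow, ← Finset.mul_sum]
  exact mul_le_mul_of_nonneg_left (sum_sum_mul_add_sq_le _ _) (by positivity)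

lemma integrable_exp_mul (hg : Continuous g) (hgc : HasCompactSupport g) {F : E2 → ℝ}
    (hF : Continuous F) (hF0 : ∀ x ∉ tsupport g, F x = 0) :
    Integrable fun x => exp (g x) * F x :=
  (hg.rexp.mul hF).integrable_of_hasCompactSupport
    (HasCompactSupport.intro' hgc (isClosed_tsupport g) hF0).mul_left

variable (hg : ContDiff ℝ ∞ g) (hgc : HasCompactSupport g)
include hg hgc

lemma integrable_exp_mul_gradSq_sq : Integrable fun x => exp (g x) * gradSq g x ^ 2 :=
  integrable_exp_mul hg.continuous hgc ((contDiff_gradSq hg).continuous.pow 2) fun x hx => by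
    simp [gradSq, pd_eq_zero_of_notMem_tsupport hx]

lemma integrable_exp_mul_hessSq : Integrable fun x => exp (g x) * hessSq g x :=
  integrable_exp_mul hg.continuous hgc (continuous_hessSq hg) fun x hx => by
    simp [hessSq, pd_pd_eq_zero_of_notMem_tsupport hx]

theorem integral_exp_mul_gradSq_sq_eq :
    ∫ x, exp (g x) * gradSq g x ^ 2
      = -∫ x, exp (g x) * (lap g x * gradSq g x + 2 * hessGrad g x) := by
  set F : Fin 2 → E2 → ℝ := fun i y => pd i g y * gradSq g y
  have hF i : ContDiff ℝ ∞ (F i) := (contDiff_pd hg i).mul (contDiff_gradSq hg)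
  have hFc i : HasCompactSupport (F i) := (hasCompactSupport_pd hgc i).mul_right
  have hexp : ContDiff ℝ ∞ fun y => exp (g y) := hg.exp
  have hC1 : (1 : WithTop ℕ∞) ≤ ∞ := by exact_mod_cast le_top
  have hweight x : exp (g x) * gradSq g x ^ 2 = ∑ i, F i x * pd i (fun y => exp (g y)) x := by
    simp only [F, pd_exp (hg.differentiable (by simp) x), gradSq, sq (∑ i, pd i g x ^ 2),
      Finset.mul_sum, Finset.sum_mul]
    exact Finset.sum_congr rfl fun i _ => Finset.sum_congr rfl fun j _ => by ring
  calc ∫ x, exp (g x) * gradSq g x ^ 2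
      = ∑ i, ∫ x, F i x * pd i (fun y => exp (g y)) x := by
        simp_rw [hweight]
        exact integral_finsetSum _ fun i _ => ((hF i).continuous.mul
          (continuous_pd (hexp.of_le hC1) i)).integrable_of_hasCompactSupport (hFc i).mul_right
    _ = ∑ i, -∫ x, pd i (F i) x * exp (g x) := Finset.sum_congr rfl fun i _ =>
        integral_mul_pd_eq_neg_integral_pd_mul ((hF i).of_le hC1) (hFc i) (hexp.of_le hC1) i
    _ = -∫ x, exp (g x) * (lap g x * gradSq g x + 2 * hessGrad g x) := by
        rw [Finset.sum_neg_distrib,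
          ← integral_finsetSum (f := fun i x => pd i (F i) x * exp (g x)) _ fun i _ =>
          ((continuous_pd ((hF i).of_le hC1) i).mul hexp.continuous).integrable_of_hasCompactSupport
            (hasCompactSupport_pd (hFc i) i).mul_right]
        simp_rw [← Finset.sum_mul, F, sum_pd_pd_mul_gradSq hg, mul_comm]

theorem integral_exp_mul_gradSq_sq_le :
    ∫ x, exp (g x) * gradSq g x ^ 2 ≤ 20 * ∫ x, exp (g x) * hessSq g x := by
  have hA := integrable_exp_mul_gradSq_sq hg hgc
  have hB := integrable_exp_mul_hessSq hg hgc
  have hpd i : Continuous (pd i g) := (contDiff_pd hg i).continuous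
  have hpd2 i j : Continuous (pd i (pd j g)) := (contDiff_pd (contDiff_pd hg j) i).continuous
  have hflux : Integrable fun x => exp (g x) * -(lap g x * gradSq g x + 2 * hessGrad g x) :=
    integrable_exp_mul hg.continuous hgc (by unfold lap gradSq hessGrad; fun_prop) fun x hx => by
      simp [lap, gradSq, hessGrad, pd_eq_zero_of_notMem_tsupport hx,
        pd_pd_eq_zero_of_notMem_tsupport hx]
  have key : ∫ x, exp (g x) * gradSq g x ^ 2
      ≤ 5 * (∫ x, exp (g x) * hessSq g x) + 3 / 4 * ∫ x, exp (g x) * gradSq g x ^ 2 :=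
    calc ∫ x, exp (g x) * gradSq g x ^ 2
        = ∫ x, exp (g x) * -(lap g x * gradSq g x + 2 * hessGrad g x) := by
          simp only [integral_exp_mul_gradSq_sq_eq hg hgc, mul_neg, integral_neg]
      _ ≤ ∫ x, (5 * (exp (g x) * hessSq g x) + 3 / 4 * (exp (g x) * gradSq g x ^ 2)) :=
          integral_mono hflux ((hB.const_mul 5).add (hA.const_mul _)) fun x => by
            have := mul_le_mul_of_nonneg_left (neg_lap_mul_gradSq_add_hessGrad_le g x)
              (exp_pos (g x)).le
            linarith
      _ = 5 * (∫ x, exp (g x) * hessSq g x) + 3 / 4 * ∫ x, exp (g x) * gradSq g x ^ 2 := by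
          rw [integral_add (hB.const_mul 5) (hA.const_mul _), integral_const_mul,
            integral_const_mul]
  linarith

lemma integral_hessSq_exp_div_le :
    ∫ x, hessSq (fun y => exp (g y)) x / exp (g x)
      ≤ 2 * (∫ x, exp (g x) * gradSq g x ^ 2) + 2 * ∫ x, exp (g x) * hessSq g x := by
  have hA := (integrable_exp_mul_gradSq_sq hg hgc).const_mul 2
  have hB := (integrable_exp_mul_hessSq hg hgc).const_mul 2
  rw [← integral_const_mul, ← integral_const_mul, ← integral_add hA hB]
  refine integral_mono_of_nonneg (ae_of_all _ fun x => ?_) (hA.add hB) (ae_of_all _ fun x => ?_)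
  · exact div_nonneg (hessSq_nonneg _ x) (exp_pos _).le
  · rw [div_le_iff₀ (exp_pos _)]
    exact (hessSq_exp_le hg x).trans_eq (by ring)

end Exponential

/-- Quantitative form of (3.10): for `c = exp ∘ g` with `g` smooth and compactly supported,
`∫ c⁻³ |∇c|⁴ + ∫ c⁻¹ |D²c|² ≤ 77 ∫ c |D²(ln c)|²`. -/
theorem stmt11 (g : E2 → ℝ) (hg : ContDiff ℝ (⊤ : ℕ∞) g) (hgc : HasCompactSupport g)
    (c : E2 → ℝ) (hc : c = fun x => Real.exp (g x)) :
    (∫ x : E2, (gradSq c x) ^ 2 / (c x) ^ 3) + (∫ x : E2, hessSq c x / c x)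
      ≤ 77 * ∫ x : E2, c x * hessSq (fun y => Real.log (c y)) x := by
  subst hc
  have hlog : (fun y => log (exp (g y))) = g := funext fun y => log_exp (g y)
  have hB : 0 ≤ ∫ x, exp (g x) * hessSq g x :=
    integral_nonneg fun x => mul_nonneg (exp_pos _).le (hessSq_nonneg g x)
  rw [hlog, integral_gradSq_exp_sq_div (hg.differentiable (by simp))]
  linarith [integral_hessSq_exp_div_le hg hgc, integral_exp_mul_gradSq_sq_le hg hgc]
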